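/- Over ℝ, the three-dimensional algebras φ₂ (φ₂(e₁,e₁)=e₂, φ₂(e₃,e₃)=e₂) and φ₅ (φ₅(e₁,e₁)=e₂, φ₅(e₃,e₃)=−e₂) are non-isomorphic nilpotent Jordan algebras, while over ℂ they are isomorphic via e₃ ↦ i e₃. -/
import Mathlib


/-- Bilinearity of a plain product. -/
def IsBilin (K : Type*) [Field K] {V : Type*} [AddCommGroup V] [Module K V]
    (φ : V → V → V) : Prop :=
  (∀ (a : K) (x y z : V), φ (a • x + y) z = a • φ x z + φ y z) ∧
  (∀ (a : K) (x y z : V), φ x (a • y + z) = a • φ x y + φ x z)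

/-- Commutativity (symmetry) of the product. -/
def IsComm {V : Type*} (φ : V → V → V) : Prop := ∀ x y, φ x y = φ y x

/-- The Jordan identity. -/
def JordanId {V : Type*} (φ : V → V → V) : Prop :=
  ∀ x y, φ (φ x x) (φ x y) = φ x (φ (φ x x) y)

/-- Lower central series: `lcs K φ 0 = C¹ = V`, and `lcs K φ m` is the term `C^{m+1}`. -/
def lcs (K : Type*) [Field K] {V : Type*} [AddCommGroup V] [Module K V]
    (φ : V → V → V) : ℕ → Submodule K V
  | 0 => ⊤
  | m + 1 => Submodule.span K {z | ∃ x ∈ lcs K φ m, ∃ y, z = φ x y}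

/-- Nilpotency: some term of the lower central series vanishes. -/
def IsNilp (K : Type*) [Field K] {V : Type*} [AddCommGroup V] [Module K V]
    (φ : V → V → V) : Prop := ∃ k, lcs K φ k = ⊥
/-- φ₂(e₁,e₁)=e₂, φ₂(e₃,e₃)=e₂ over a field K. -/
def φ₂K (K : Type*) [Field K] (x y : Fin 3 → K) : Fin 3 → K :=
  ![0, x 0 * y 0 + x 2 * y 2, 0]

/-- φ₅(e₁,e₁)=e₂, φ₅(e₃,e₃)=−e₂ over a field K. -/
def φ₅K (K : Type*) [Field K] (x y : Fin 3 → K) : Fin 3 → K :=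
  ![0, x 0 * y 0 - x 2 * y 2, 0]

lemma nilp_aux {K : Type*} [Field K] (φ : (Fin 3 → K) → (Fin 3 → K) → (Fin 3 → K))
    (h0 : ∀ x y, (φ x y) 0 = 0) (h2 : ∀ x y, (φ x y) 2 = 0)
    (hz : ∀ x y, x 0 = 0 → x 2 = 0 → φ x y = 0) : IsNilp K φ := by
  refine ⟨2, ?_⟩
  have hS : lcs K φ 1 ≤ (LinearMap.ker (LinearMap.proj 0 : (Fin 3 → K) →ₗ[K] K) ⊓
      LinearMap.ker (LinearMap.proj 2 : (Fin 3 → K) →ₗ[K] K)) := by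
    apply Submodule.span_le.2
    rintro z ⟨x, -, y, rfl⟩
    exact ⟨h0 x y, h2 x y⟩
  rw [show (2:ℕ) = 1 + 1 from rfl, lcs, eq_bot_iff]
  apply Submodule.span_le.2
  rintro z ⟨x, hx, y, rfl⟩
  have h1 : x 0 = 0 := (Submodule.mem_inf.1 (hS hx)).1
  have h3 : x 2 = 0 := (Submodule.mem_inf.1 (hS hx)).2
  rw [SetLike.mem_coe, Submodule.mem_bot]
  exact hz x y h1 h3

/-- over ℝ, φ₂ and φ₅ are non-isomorphic nilpotent Jordan algebras,
while over ℂ they are isomorphic via e₃ ↦ i·e₃. -/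
theorem phi_two_phi_five_real_vs_complex :
    (IsBilin ℝ (φ₂K ℝ) ∧ IsComm (φ₂K ℝ) ∧ JordanId (φ₂K ℝ) ∧ IsNilp ℝ (φ₂K ℝ)) ∧
    (IsBilin ℝ (φ₅K ℝ) ∧ IsComm (φ₅K ℝ) ∧ JordanId (φ₅K ℝ) ∧ IsNilp ℝ (φ₅K ℝ)) ∧
    (¬ ∃ f : (Fin 3 → ℝ) ≃ₗ[ℝ] (Fin 3 → ℝ),
        ∀ x y, f (φ₂K ℝ x y) = φ₅K ℝ (f x) (f y)) ∧
    (∃ f : (Fin 3 → ℂ) ≃ₗ[ℂ] (Fin 3 → ℂ),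
        (∀ x, f x = ![x 0, x 1, Complex.I * x 2]) ∧
        ∀ x y, f (φ₂K ℂ x y) = φ₅K ℂ (f x) (f y)) := by
  refine ⟨⟨⟨?_, ?_⟩, ?_, ?_, ?_⟩, ⟨⟨?_, ?_⟩, ?_, ?_, ?_⟩, ?_, ?_⟩
  · intro a x y z; funext i; fin_cases i <;> simp [φ₂K] <;> ring
  · intro a x y z; funext i; fin_cases i <;> simp [φ₂K] <;> ring
  · intro x y; funext i; fin_cases i <;> simp [φ₂K] <;> ring
  · intro x y; funext i; fin_cases i <;> simp [φ₂K]
  · exact nilp_aux _ (fun x y => rfl) (fun x y => rfl)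
      (fun x y h1 h3 => by funext i; fin_cases i <;> simp [φ₂K, h1, h3])
  · intro a x y z; funext i; fin_cases i <;> simp [φ₅K] <;> ring
  · intro a x y z; funext i; fin_cases i <;> simp [φ₅K] <;> ring
  · intro x y; funext i; fin_cases i <;> simp [φ₅K] <;> ring
  · intro x y; funext i; fin_cases i <;> simp [φ₅K]
  · exact nilp_aux _ (fun x y => rfl) (fun x y => rfl)
      (fun x y h1 h3 => by funext i; fin_cases i <;> simp [φ₅K, h1, h3])
  · -- non-isomorphism over ℝ
    rintro ⟨f, hf⟩
    set a : Fin 3 → ℝ := f ![1, 0, 0] with ha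
    set b : Fin 3 → ℝ := f ![0, 0, 1] with hb
    have h1 : f ![0, 1, 0] = ![0, a 0 ^ 2 - a 2 ^ 2, 0] := by
      have := hf ![1, 0, 0] ![1, 0, 0]
      simpa [φ₂K, φ₅K, sq] using this
    have h2 : f ![0, 1, 0] = ![0, b 0 ^ 2 - b 2 ^ 2, 0] := by
      have := hf ![0, 0, 1] ![0, 0, 1]
      simpa [φ₂K, φ₅K, sq] using this
    have h3 : a 0 * b 0 - a 2 * b 2 = 0 := by
      have := hf ![1, 0, 0] ![0, 0, 1]
      have h0 : φ₂K ℝ ![1, 0, 0] ![0, 0, 1] = 0 := by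
        funext i; fin_cases i <;> simp [φ₂K]
      rw [h0, map_zero] at this
      have := congrFun this.symm 1
      simpa [φ₅K] using this
    have hc : a 0 ^ 2 - a 2 ^ 2 ≠ 0 := by
      intro h
      have hz : f ![0, 1, 0] = 0 := by
        rw [h1, h]; funext i; fin_cases i <;> simp
      have h4 : (![0, 1, 0] : Fin 3 → ℝ) = 0 :=
        f.injective (hz.trans (map_zero f).symm)
      have := congrFun h4 1
      simp at this
    have heq : a 0 ^ 2 - a 2 ^ 2 = b 0 ^ 2 - b 2 ^ 2 := by
      have := h1.symm.trans h2
      have := congrFun this 1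
      simpa using this
    have key : (a 0 ^ 2 - a 2 ^ 2) * (b 0 ^ 2 - b 2 ^ 2)
        = (a 0 * b 0 - a 2 * b 2) ^ 2 - (a 0 * b 2 - a 2 * b 0) ^ 2 := by ring
    rw [h3, ← heq] at key
    have hcc : 0 < (a 0 ^ 2 - a 2 ^ 2) ^ 2 := by positivity
    nlinarith [sq_nonneg (a 0 * b 2 - a 2 * b 0)]
  · -- isomorphism over ℂ
    refine ⟨{ toFun := fun x => ![x 0, x 1, Complex.I * x 2],
              invFun := fun x => ![x 0, x 1, -Complex.I * x 2],
              map_add' := fun x y => by funext i; fin_cases i <;> simp <;> ring,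
              map_smul' := fun c x => by funext i; fin_cases i <;> simp <;> ring,
              left_inv := fun x => by
                funext i; fin_cases i <;> simp [Complex.I_mul_I] <;> ring_nf <;>
                  simp [Complex.I_sq],
              right_inv := fun x => by
                funext i; fin_cases i <;> simp [Complex.I_mul_I] <;> ring_nf <;>
                  simp [Complex.I_sq] }, fun x => rfl, ?_⟩
    intro x y
    funext i
    fin_cases i <;> simp [φ₂K, φ₅K] <;> ring_nf <;> simp [Complex.I_sq] <;> ring
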